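/- Let r, s > 0 be real numbers with rs > 1 and set X = r p² + (pq + qp) + s q² on C_c^∞(ℝ,ℂ). Then for every u ∈ C_c^∞(ℝ,ℂ): ‖X u‖² + 2(rs − 1) ‖u‖² ≥ (1/4) · min{ (s − 1/r)², (r − 1/s)² } · ‖(p² + q²) u‖². -/

import Mathlib

open MeasureTheory Complex
open scoped ComplexOrder

noncomputable section

/-- Operators acting on complex-valued functions on `ℝ`. -/
abbrev Op : Type := (ℝ → ℂ) → (ℝ → ℂ)

/-- The momentum operator `(p u)(x) = -i u'(x)`. -/
def pOp : Op := fun u x => -Complex.I * deriv u x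

/-- The position operator `(q u)(x) = x * u(x)`. -/
def qOp : Op := fun u x => (x : ℂ) * u x

/-- Multiplication operator by a real-valued function. -/
def mulOp (f : ℝ → ℝ) : Op := fun u x => (f x : ℂ) * u x

/-- Commutator of two operators. -/
def opComm (A B : Op) : Op := fun u => A (B u) - B (A u)

/-- Anticommutator of two operators. -/
def opACom (A B : Op) : Op := fun u => A (B u) + B (A u)

/-- The `L²(ℝ,ℂ)` inner product, antilinear in the first argument. -/
def ip (u v : ℝ → ℂ) : ℂ := ∫ x : ℝ, (starRingEnd ℂ) (u x) * v x

/-- `u ∈ C_c^∞(ℝ,ℂ)`: smooth and compactly supported. -/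
def IsTest (u : ℝ → ℂ) : Prop := ContDiff ℝ (⊤ : ℕ∞) u ∧ HasCompactSupport u

/-- `X = r p² + (pq + qp) + s q²`. -/
def Xop (r s : ℝ) : Op := (r : ℂ) • (pOp ∘ pOp) + opACom pOp qOp + (s : ℂ) • (qOp ∘ qOp)

/-- `p² + q²`. -/
def Nop : Op := fun v => pOp (pOp v) + qOp (qOp v)

/-!
The argument only involves the symmetry of `p` and `q` and the relation `[p, q] = -i`, so it
works for any such pair on a complex pre-Hilbert space; `C_c^∞(ℝ,ℂ)` with the `L²` product is one.

For a real linear form `C = a p + b q` the commutators `[p, C]`, `[q, C]` are scalars, and moving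
one factor of each square across the inner product gives
`Re ⟨(p² + q²) u, C² u⟩ ≥ -(a² + b²) ‖u‖²`.
With `m = min (s - 1/r) (r - 1/s)`, the operator `X - (m/2) N = α p² + (pq + qp) + β q²` has
`α > 0` and `α β ≥ 1`, so it equals `α⁻¹ (α p + q)² + (β - α⁻¹) q²`, a nonnegative combination
of such squares; hence `Re ⟨N u, (X - (m/2) N) u⟩ ≥ -(α + β) ‖u‖²`. Expanding
`‖X u‖² = ‖(m/2) N u + (X - (m/2) N) u‖²` then gives
`‖X u‖² ≥ (m/2)² ‖N u‖² - m (r + s - m) ‖u‖²`, and `m (r + s - m) ≤ 2 (r s - 1)`.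
-/

open scoped InnerProductSpace ComplexConjugate

lemma one_le_mul_sub_half {r s m : ℝ} (hr : 0 < r) (hs : 0 < s) (h₁ : m ≤ s - 1 / r)
    (h₂ : m ≤ r - 1 / s) : 1 ≤ (r - m / 2) * (s - m / 2) := by
  have hAM : (r * s - 1) ^ 2 / (4 * (r * s)) = (r + 1 / s) / 2 * ((s + 1 / r) / 2) - 1 := by
    field_simp; ring
  have : 0 < 1 / s := by positivity
  calc 1 ≤ (r + 1 / s) / 2 * ((s + 1 / r) / 2) := by
        have : 0 ≤ (r * s - 1) ^ 2 / (4 * (r * s)) := by positivity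
        linarith
    _ ≤ (r - m / 2) * (s - m / 2) := by gcongr <;> linarith

lemma le_of_sub_inv_le {r s : ℝ} (hr : 0 < r) (hs : 0 < s) (hrs : 1 < r * s)
    (h : r - 1 / s ≤ s - 1 / r) : r ≤ s := by
  by_contra! hsr
  have e : (s - 1 / r) - (r - 1 / s) = (s - r) * (r * s - 1) / (r * s) := by field_simp
  have : (s - r) * (r * s - 1) / (r * s) < 0 :=
    div_neg_of_neg_of_pos (mul_neg_of_neg_of_pos (by linarith) (by linarith)) (by positivity)
  linarith

lemma sub_inv_mul_le {r s : ℝ} (hr : 0 < r) (hs : 0 < s) (hrs : 1 < r * s)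
    (h : r - 1 / s ≤ s - 1 / r) : (r - 1 / s) * (r + s - (r - 1 / s)) ≤ 2 * (r * s - 1) := by
  have hsr := le_of_sub_inv_le hr hs hrs h
  have e : 2 * (r * s - 1) - (r - 1 / s) * (r + s - (r - 1 / s))
      = (s ^ 2 - 1) * (r * s - 1) / s ^ 2 := by
    field_simp; ring
  have : 0 ≤ (s ^ 2 - 1) * (r * s - 1) / s ^ 2 := by
    apply div_nonneg _ (sq_nonneg s)
    apply mul_nonneg <;> nlinarith
  linarith

lemma min_sub_inv_mul_le {r s : ℝ} (hr : 0 < r) (hs : 0 < s) (hrs : 1 < r * s) :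
    min (s - 1 / r) (r - 1 / s) * (r + s - min (s - 1 / r) (r - 1 / s)) ≤ 2 * (r * s - 1) := by
  rcases le_total (s - 1 / r) (r - 1 / s) with h | h
  · rw [min_eq_left h, add_comm r s, mul_comm r s]
    exact sub_inv_mul_le hs hr (by linarith) h
  · rw [min_eq_right h]
    exact sub_inv_mul_le hr hs hrs h

lemma min_sq_eq_sq_min {a b : ℝ} (ha : 0 ≤ a) (hb : 0 ≤ b) :
    min (a ^ 2) (b ^ 2) = min a b ^ 2 := by
  rcases le_total a b with h | h
  · rw [min_eq_left h, min_eq_left (pow_le_pow_left₀ ha h 2)]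
  · rw [min_eq_right h, min_eq_right (pow_le_pow_left₀ hb h 2)]

namespace LinearMap

variable {E : Type*} [SeminormedAddCommGroup E] [InnerProductSpace ℂ E]

def sqSum (P Q : E →ₗ[ℂ] E) : E →ₗ[ℂ] E := P ∘ₗ P + Q ∘ₗ Q

def quadOp (P Q : E →ₗ[ℂ] E) (a b : ℝ) : E →ₗ[ℂ] E :=
  (a : ℂ) • (P ∘ₗ P) + (P ∘ₗ Q + Q ∘ₗ P) + (b : ℂ) • (Q ∘ₗ Q)

@[simp] lemma sqSum_apply (P Q : E →ₗ[ℂ] E) (u : E) : sqSum P Q u = P (P u) + Q (Q u) := rfl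

@[simp] lemma quadOp_apply (P Q : E →ₗ[ℂ] E) (a b : ℝ) (u : E) :
    quadOp P Q a b u = (a : ℂ) • P (P u) + (P (Q u) + Q (P u)) + (b : ℂ) • Q (Q u) := rfl

variable {A B P Q : E →ₗ[ℂ] E}

lemma im_inner_eq_of_commutator (hA : A.IsSymmetric) (hB : B.IsSymmetric) {c : ℝ}
    (hAB : ∀ u, A (B u) - B (A u) = (c * I) • u) (u : E) :
    im ⟪A u, B u⟫_ℂ = c / 2 * ‖u‖ ^ 2 := by
  have h : ((2 * im ⟪A u, B u⟫_ℂ : ℝ) : ℂ) * I = ((c * ‖u‖ ^ 2 : ℝ) : ℂ) * I := by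
    rw [← sub_conj, inner_conj_symm, hA, hB u, ← inner_sub_right, hAB, inner_smul_right,
      inner_self_eq_norm_sq_to_K, RCLike.ofReal_eq_complex_ofReal]
    push_cast
    ring
  have := ofReal_injective (mul_right_cancel₀ I_ne_zero h)
  linarith

lemma re_inner_sq_sq_of_commutator (hA : A.IsSymmetric) (hB : B.IsSymmetric) {c : ℝ}
    (hAB : ∀ u, A (B u) - B (A u) = (c * I) • u) (u : E) :
    re ⟪A (A u), B (B u)⟫_ℂ = ‖A (B u)‖ ^ 2 - c ^ 2 * ‖u‖ ^ 2 := by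
  have hBA : ∀ v, B (A v) = A (B v) - (c * I) • v := fun v => by rw [← hAB]; abel
  have hBAA : B (A (A u)) = A (A (B u)) - (2 * c * I) • A u := by
    rw [hBA, hBA, map_sub, map_smul]; module
  rw [← hB, hBAA, inner_sub_left, hA, inner_smul_left, sub_re,
    ← RCLike.re_to_complex, inner_self_eq_norm_sq]
  simp [im_inner_eq_of_commutator hA hB hAB]
  ring

lemma neg_mul_norm_sq_le_re_inner_sqSum (hP : P.IsSymmetric) (hQ : Q.IsSymmetric)
    {C : E →ₗ[ℂ] E} (hC : C.IsSymmetric) {a b : ℝ}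
    (hPC : ∀ u, P (C u) - C (P u) = (a * I) • u) (hQC : ∀ u, Q (C u) - C (Q u) = (b * I) • u)
    (u : E) :
    -((a ^ 2 + b ^ 2) * ‖u‖ ^ 2) ≤ re ⟪sqSum P Q u, C (C u)⟫_ℂ := by
  rw [sqSum_apply, inner_add_left, add_re, re_inner_sq_sq_of_commutator hP hC hPC,
    re_inner_sq_sq_of_commutator hQ hC hQC]
  nlinarith [sq_nonneg ‖P (C u)‖, sq_nonneg ‖Q (C u)‖]

section CanonicalCommutation

variable (hP : P.IsSymmetric) (hQ : Q.IsSymmetric) (hPQ : ∀ u, P (Q u) - Q (P u) = -I • u)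
include hP hQ hPQ

lemma neg_mul_norm_sq_le_re_inner_sqSum_quadOp {α β : ℝ} (hα : 0 < α) (hαβ : 1 ≤ α * β)
    (u : E) :
    -((α + β) * ‖u‖ ^ 2) ≤ re ⟪sqSum P Q u, quadOp P Q α β u⟫_ℂ := by
  set C := (α : ℂ) • P + Q
  have hC : C.IsSymmetric := (hP.smul (conj_ofReal α)).add hQ
  have hPC : ∀ v, P (C v) - C (P v) = ((-1 : ℝ) * I) • v := fun v => by
    rw [ofReal_neg, ofReal_one, neg_one_mul, ← hPQ]
    simp only [C, add_apply, smul_apply, map_add, map_smul]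
    abel
  have hQC : ∀ v, Q (C v) - C (Q v) = (α * I) • v := fun v => by
    rw [mul_smul, ← neg_neg (I • v), ← neg_smul, ← hPQ]
    simp only [C, add_apply, smul_apply, map_add, map_smul]
    module
  have hQQ : ∀ v, Q (Q v) - Q (Q v) = ((0 : ℝ) * I) • v := fun v => by simp
  have hPQ' : ∀ v, P (Q v) - Q (P v) = ((-1 : ℝ) * I) • v := fun v => by simp [hPQ]
  have hsplit : quadOp P Q α β u = ((α⁻¹ : ℝ) : ℂ) • C (C u) + ((β - α⁻¹ : ℝ) : ℂ) • Q (Q u) := by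
    simp only [C, quadOp_apply, add_apply, smul_apply, map_add, map_smul]
    have : (α : ℂ) ≠ 0 := ofReal_ne_zero.mpr hα.ne'
    match_scalars <;> field_simp
    ring
  have h1 := neg_mul_norm_sq_le_re_inner_sqSum hP hQ hC hPC hQC u
  have h2 := neg_mul_norm_sq_le_re_inner_sqSum hP hQ hQ hPQ' hQQ u
  rw [hsplit, inner_add_right, inner_smul_right, inner_smul_right, add_re, re_ofReal_mul,
    re_ofReal_mul]
  have hβ : α⁻¹ ≤ β := by rw [inv_le_iff_one_le_mul₀' hα]; linarith
  calc -((α + β) * ‖u‖ ^ 2)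
      = α⁻¹ * -(((-1) ^ 2 + α ^ 2) * ‖u‖ ^ 2) + (β - α⁻¹) * -(((-1) ^ 2 + 0 ^ 2) * ‖u‖ ^ 2) := by
        field_simp; ring
    _ ≤ _ := by gcongr

lemma sq_mul_norm_sq_sqSum_le {α β c : ℝ} (hα : 0 < α) (hαβ : 1 ≤ α * β) (hc : 0 ≤ c)
    (u : E) :
    c ^ 2 * ‖sqSum P Q u‖ ^ 2 - 2 * c * (α + β) * ‖u‖ ^ 2 ≤ ‖quadOp P Q (α + c) (β + c) u‖ ^ 2 := by
  have hshift : quadOp P Q (α + c) (β + c) u = (c : ℂ) • sqSum P Q u + quadOp P Q α β u := by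
    simp only [quadOp_apply, sqSum_apply]
    push_cast
    module
  have hY := neg_mul_norm_sq_le_re_inner_sqSum_quadOp hP hQ hPQ hα hαβ u
  rw [hshift, @norm_add_sq ℂ, norm_smul, inner_smul_left, conj_ofReal, RCLike.re_to_complex,
    re_ofReal_mul, norm_real, Real.norm_of_nonneg hc]
  nlinarith [mul_le_mul_of_nonneg_left hY hc, sq_nonneg ‖quadOp P Q α β u‖]

theorem min_sq_mul_norm_sq_sqSum_le {r s : ℝ} (hr : 0 < r) (hs : 0 < s) (hrs : 1 < r * s)
    (u : E) :
    1 / 4 * min ((s - 1 / r) ^ 2) ((r - 1 / s) ^ 2) * ‖sqSum P Q u‖ ^ 2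
      ≤ ‖quadOp P Q r s u‖ ^ 2 + 2 * (r * s - 1) * ‖u‖ ^ 2 := by
  have h₁ : 0 < s - 1 / r := sub_pos.2 ((div_lt_iff₀ hr).2 (by linarith))
  have h₂ : 0 < r - 1 / s := sub_pos.2 ((div_lt_iff₀ hs).2 (by linarith))
  have hm := min_sub_inv_mul_le hr hs hrs
  rw [min_sq_eq_sq_min h₁.le h₂.le]
  set m := min (s - 1 / r) (r - 1 / s)
  have hm₀ : 0 ≤ m := le_min h₁.le h₂.le
  have hm₁ : m ≤ s - 1 / r := min_le_left _ _
  have hm₂ : m ≤ r - 1 / s := min_le_right _ _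
  have hα : 0 < r - m / 2 := by linarith [one_div_pos.2 hs]
  have key := sq_mul_norm_sq_sqSum_le hP hQ hPQ hα (one_le_mul_sub_half hr hs hm₁ hm₂)
    (c := m / 2) (by positivity) u
  rw [sub_add_cancel, sub_add_cancel] at key
  nlinarith [mul_le_mul_of_nonneg_right hm (sq_nonneg ‖u‖)]

end CanonicalCommutation

end LinearMap

section TestFunctions

variable {u v : ℝ → ℂ}

namespace IsTest

lemma continuous (hu : IsTest u) : Continuous u := hu.1.continuous

lemma differentiable (hu : IsTest u) : Differentiable ℝ u := hu.1.differentiable (by simp)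

lemma deriv (hu : IsTest u) : IsTest (deriv u) :=
  ⟨(contDiff_infty_iff_deriv.mp hu.1).2, hu.2.deriv⟩

lemma pOp (hu : IsTest u) : IsTest (pOp u) :=
  ⟨contDiff_const.mul hu.deriv.1, hu.deriv.2.mul_left⟩

lemma qOp (hu : IsTest u) : IsTest (qOp u) :=
  ⟨ofRealCLM.contDiff.mul hu.1, hu.2.mul_left⟩

lemma integrable_conj_mul (hu : IsTest u) (hv : IsTest v) :
    Integrable fun x => conj (u x) * v x :=
  ((continuous_conj.comp hu.continuous).mul hv.continuous).integrable_of_hasCompactSupport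
    hv.2.mul_left

end IsTest

def testFunctions : Submodule ℂ (ℝ → ℂ) where
  carrier := {u | IsTest u}
  add_mem' hu hv := ⟨hu.1.add hv.1, hu.2.add hv.2⟩
  zero_mem' := ⟨contDiff_const, HasCompactSupport.zero⟩
  smul_mem' c _ hu := ⟨hu.1.const_smul c, hu.2.smul_left⟩

lemma ip_self (u : ℝ → ℂ) : ip u u = ((∫ x, normSq (u x) : ℝ) : ℂ) := by
  simp_rw [ip, ← normSq_eq_conj_mul_self, integral_complex_ofReal]

lemma ip_add_left (hu : IsTest u) (hv : IsTest v) {w : ℝ → ℂ} (hw : IsTest w) :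
    ip (u + v) w = ip u w + ip v w := by
  simp only [ip, Pi.add_apply, map_add, add_mul]
  exact integral_add (hu.integrable_conj_mul hw) (hv.integrable_conj_mul hw)

lemma ip_smul_left (c : ℂ) (u v : ℝ → ℂ) : ip (c • u) v = conj c * ip u v := by
  simp only [ip, Pi.smul_apply, smul_eq_mul, map_mul, mul_assoc, integral_const_mul]

lemma ip_pOp (hu : IsTest u) (hv : IsTest v) : ip (pOp u) v = ip u (pOp v) := by
  have hibp : ∫ x, conj (u x) * deriv v x = -∫ x, conj (deriv u x) * v x :=
    integral_mul_deriv_eq_deriv_mul_of_integrable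
      (fun x _ => (hu.differentiable x).hasDerivAt.star)
      (fun x _ => (hv.differentiable x).hasDerivAt)
      (hu.integrable_conj_mul hv.deriv) (hu.deriv.integrable_conj_mul hv)
      (hu.integrable_conj_mul hv)
  simp only [ip, pOp, map_mul, map_neg, conj_I, neg_neg]
  simp_rw [mul_assoc, mul_left_comm (conj (u _)), integral_const_mul, hibp]
  ring

lemma ip_qOp (u v : ℝ → ℂ) : ip (qOp u) v = ip u (qOp v) := by
  simp only [ip, qOp, map_mul, conj_ofReal]
  simp_rw [mul_assoc, mul_left_comm (conj (u _))]

lemma pOp_add (hu : Differentiable ℝ u) (hv : Differentiable ℝ v) :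
    pOp (u + v) = pOp u + pOp v := by
  funext x
  simp only [pOp, Pi.add_apply, deriv_add (hu x) (hv x)]
  ring

lemma pOp_smul (c : ℂ) (hu : Differentiable ℝ u) : pOp (c • u) = c • pOp u := by
  funext x
  simp only [pOp, Pi.smul_apply, smul_eq_mul, deriv_const_smul c (hu x)]
  ring

lemma pOp_qOp_sub (hu : IsTest u) : pOp (qOp u) - qOp (pOp u) = -I • u := by
  funext x
  have hx : HasDerivAt (fun y : ℝ => (y : ℂ)) 1 x := by simpa using (hasDerivAt_id x).ofReal_comp
  have hqu : HasDerivAt (qOp u) (1 * u x + x * deriv u x) x :=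
    hx.mul (hu.differentiable x).hasDerivAt
  simp only [pOp, qOp, Pi.sub_apply, Pi.smul_apply, smul_eq_mul, hqu.deriv]
  ring

end TestFunctions

/-- A type synonym, so that the `L²` seminorm put on it does not clash with the topology the
subtype would inherit from `ℝ → ℂ`. -/
def TestSpace : Type := testFunctions

namespace TestSpace

instance : AddCommGroup TestSpace := inferInstanceAs (AddCommGroup testFunctions)

instance : Module ℂ TestSpace := inferInstanceAs (Module ℂ testFunctions)

lemma isTest (u : TestSpace) : IsTest u.1 := u.2

abbrev innerCore : PreInnerProductSpace.Core ℂ TestSpace where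
  inner u v := ip u.1 v.1
  conj_inner_symm u v := by
    simp only [ip, ← integral_conj, map_mul, conj_conj, mul_comm]
  re_inner_nonneg u := by
    rw [ip_self, RCLike.re_to_complex, ofReal_re]
    exact integral_nonneg fun x => normSq_nonneg _
  add_left u v w := ip_add_left u.isTest v.isTest w.isTest
  smul_left u v c := ip_smul_left c u.1 v.1

instance : SeminormedAddCommGroup TestSpace :=
  InnerProductSpace.Core.toSeminormedAddCommGroup (c := innerCore)

instance : InnerProductSpace ℂ TestSpace := InnerProductSpace.ofCore innerCore

lemma inner_def (u v : TestSpace) : ⟪u, v⟫_ℂ = ip u.1 v.1 := rfl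

def momentum : TestSpace →ₗ[ℂ] TestSpace where
  toFun u := ⟨pOp u.1, u.isTest.pOp⟩
  map_add' u v := Subtype.ext (pOp_add u.isTest.differentiable v.isTest.differentiable)
  map_smul' c u := Subtype.ext (pOp_smul c u.isTest.differentiable)

def position : TestSpace →ₗ[ℂ] TestSpace where
  toFun u := ⟨qOp u.1, u.isTest.qOp⟩
  map_add' _ _ := Subtype.ext <| funext fun _ => mul_add _ _ _
  map_smul' _ _ := Subtype.ext <| funext fun _ => mul_left_comm _ _ _

lemma momentum_isSymmetric : momentum.IsSymmetric := fun u v => ip_pOp u.isTest v.isTest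

lemma position_isSymmetric : position.IsSymmetric := fun u v => ip_qOp u.1 v.1

lemma momentum_position_sub (u : TestSpace) :
    momentum (position u) - position (momentum u) = -I • u :=
  Subtype.ext (pOp_qOp_sub u.isTest)

lemma ip_self_eq_norm_sq (u : TestSpace) : ip u.1 u.1 = ((‖u‖ ^ 2 : ℝ) : ℂ) := by
  rw [← inner_def, inner_self_eq_norm_sq_to_K]
  push_cast
  rfl

end TestSpace

/-- `‖X u‖² + 2(rs − 1)‖u‖² ≥ (1/4) min{(s − 1/r)², (r − 1/s)²} ‖(p²+q²)u‖²`. -/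
theorem X_graph_norm_lower_bound (r s : ℝ) (hr : 0 < r) (hs : 0 < s) (hrs : 1 < r * s)
    (u : ℝ → ℂ) (hu : IsTest u) :
    (((1/4) * min ((s - 1/r)^2) ((r - 1/s)^2) : ℝ) : ℂ) * ip (Nop u) (Nop u)
      ≤ ip (Xop r s u) (Xop r s u) + 2 * ((r*s - 1 : ℝ) : ℂ) * ip u u := by
  let U : TestSpace := ⟨u, hu⟩
  have hN : Nop u = (LinearMap.sqSum TestSpace.momentum TestSpace.position U).1 := rfl
  have hX : Xop r s u = (LinearMap.quadOp TestSpace.momentum TestSpace.position r s U).1 := rfl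
  rw [hN, hX, show u = U.1 from rfl, TestSpace.ip_self_eq_norm_sq, TestSpace.ip_self_eq_norm_sq,
    TestSpace.ip_self_eq_norm_sq]
  exact_mod_cast LinearMap.min_sq_mul_norm_sq_sqSum_le TestSpace.momentum_isSymmetric
    TestSpace.position_isSymmetric TestSpace.momentum_position_sub hr hs hrs U
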